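/- Gradient bound for (H0,H1)-smooth functions: if f: ℝ^d → ℝ is (H0, H1)-smooth with global minimum value f*, then for every w, ‖∇f(w)‖² ≤ (9/4)(H0 + 3H1(f(w) − f*))(f(w) − f*). -/

import Mathlib

/-!
Restrict `f` to the ray from `w` in the direction of steepest descent; on it `φ'' ≤ H0 + H1 (φ - f*)`.
If the bound failed, take the step `η = 3Δ / (2‖∇f(w)‖)` with `Δ = f(w) - f*`. Taylor's bound at the
point where `φ - f*` is maximal on `[0, η]` shows that this maximum `M` satisfies
`M ≤ Δ + (H0 + H1 M) η² / 2`, which forces `M < 3Δ`; Taylor's bound at `η` then gives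
`φ(η) ≤ f* + Δ - 3Δ/2 + (H0 + 3 H1 Δ) η² / 2 < f*`, contradicting the lower bound.
-/

open Set

lemma le_of_hasDerivAt_of_nonneg {u u' : ℝ → ℝ} {a b : ℝ} (hab : a ≤ b)
    (hu : ∀ t, HasDerivAt u (u' t) t) (hu' : ∀ t ∈ Ioo a b, 0 ≤ u' t) : u a ≤ u b := by
  refine monotoneOn_of_hasDerivWithinAt_nonneg (convex_Icc a b)
    (fun t _ => (hu t).continuousAt.continuousWithinAt) (fun t _ => (hu t).hasDerivWithinAt)
    (by rwa [interior_Icc]) (left_mem_Icc.2 hab) (right_mem_Icc.2 hab) hab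

lemma le_taylor_of_secondDeriv_le {φ φ' φ'' : ℝ → ℝ} {C T : ℝ} (hT : 0 ≤ T)
    (hφ : ∀ t, HasDerivAt φ (φ' t) t) (hφ' : ∀ t, HasDerivAt φ' (φ'' t) t)
    (hC : ∀ t ∈ Icc 0 T, φ'' t ≤ C) :
    φ T ≤ φ 0 + T * φ' 0 + C * T ^ 2 / 2 := by
  have hφ'_le : ∀ t ∈ Icc 0 T, φ' t ≤ φ' 0 + C * t := by
    intro t ht
    have := le_of_hasDerivAt_of_nonneg (u := fun s => φ' 0 + C * s - φ' s) ht.1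
      (fun s => (((hasDerivAt_id s).const_mul C).const_add _).sub (hφ' s))
      (fun s hs => by
        have := hC s ⟨hs.1.le, hs.2.le.trans ht.2⟩
        simp only [mul_one]; linarith)
    simp only [mul_zero, add_zero, sub_self] at this
    linarith
  have := le_of_hasDerivAt_of_nonneg (u := fun s => φ 0 + s * φ' 0 + C * s ^ 2 / 2 - φ s) hT
    (fun s => ((((hasDerivAt_id s).mul_const _).const_add _).add
      (((hasDerivAt_pow 2 s).const_mul C).div_const 2)).sub (hφ s))
    (fun s hs => by
      have := hφ'_le s (Ioo_subset_Icc_self hs)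
      simp only [one_mul, Nat.cast_ofNat]; linarith)
  norm_num at this
  linarith

lemma lt_three_mul_of_le_add_mul_sq {H0 H1 Δ M η : ℝ} (hH0 : 0 ≤ H0)
    (hΔ : 0 < Δ) (hη : η ^ 2 * (H0 + 3 * H1 * Δ) < Δ)
    (hM : M ≤ Δ + (H0 + H1 * M) * η ^ 2 / 2) : M < 3 * Δ := by
  have h3 : 3 * H1 * η ^ 2 < 1 := by
    by_contra! h
    nlinarith [mul_nonneg hH0 (sq_nonneg η)]
  nlinarith [mul_nonneg hH0 (sq_nonneg η)]

section OneDim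

variable {φ φ' φ'' : ℝ → ℝ} {H0 H1 fstar : ℝ}

lemma exists_segment_sup_bound (hH0 : 0 ≤ H0) (hH1 : 0 ≤ H1)
    (hφ : ∀ t, HasDerivAt φ (φ' t) t) (hφ' : ∀ t, HasDerivAt φ' (φ'' t) t)
    (hlb : ∀ t, fstar ≤ φ t) (hφ'' : ∀ t, φ'' t ≤ H0 + H1 * (φ t - fstar))
    (hφ'0 : φ' 0 ≤ 0) {η : ℝ} (hη : 0 ≤ η) :
    ∃ M, M ≤ φ 0 - fstar + (H0 + H1 * M) * η ^ 2 / 2 ∧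
      φ η ≤ φ 0 + η * φ' 0 + (H0 + H1 * M) * η ^ 2 / 2 := by
  have hcont : Continuous φ := continuous_iff_continuousAt.2 fun t => (hφ t).continuousAt
  -- `M` will be the maximum `φ ts - fstar` of `φ - fstar` on `[0, η]`.
  obtain ⟨ts, hts, hmax⟩ := isCompact_Icc.exists_isMaxOn (nonempty_Icc.2 hη) hcont.continuousOn
  have hC : ∀ t ∈ Icc 0 η, φ'' t ≤ H0 + H1 * (φ ts - fstar) := fun t ht =>
    (hφ'' t).trans (by gcongr; exact hmax ht)
  have hC0 : 0 ≤ H0 + H1 * (φ ts - fstar) := by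
    have := hlb ts; positivity
  refine ⟨φ ts - fstar, ?_, le_taylor_of_secondDeriv_le hη hφ hφ' hC⟩
  have htaylor := le_taylor_of_secondDeriv_le hts.1 hφ hφ'
    (fun t ht => hC t ⟨ht.1, ht.2.trans hts.2⟩)
  have hts_sq : ts ^ 2 ≤ η ^ 2 := pow_le_pow_left₀ hts.1 hts.2 2
  nlinarith [mul_nonpos_of_nonneg_of_nonpos hts.1 hφ'0, mul_le_mul_of_nonneg_left hts_sq hC0]

theorem sq_deriv_le_of_secondDeriv_le (hH0 : 0 ≤ H0) (hH1 : 0 ≤ H1)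
    (hφ : ∀ t, HasDerivAt φ (φ' t) t) (hφ' : ∀ t, HasDerivAt φ' (φ'' t) t)
    (hlb : ∀ t, fstar ≤ φ t) (hφ'' : ∀ t, φ'' t ≤ H0 + H1 * (φ t - fstar))
    (hφ'0 : φ' 0 ≤ 0) :
    φ' 0 ^ 2 ≤ 9 / 4 * (H0 + 3 * H1 * (φ 0 - fstar)) * (φ 0 - fstar) := by
  obtain ⟨Δ, hΔdef⟩ : ∃ Δ, φ 0 - fstar = Δ := ⟨_, rfl⟩
  rw [hΔdef]
  obtain rfl | hΔ := (hΔdef ▸ sub_nonneg.2 (hlb 0)).eq_or_lt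
  · have hmin : IsLocalMin φ 0 := .of_forall fun t => by linarith [hlb t]
    simp [hmin.hasDerivAt_eq_zero (hφ 0)]
  by_contra! hcon
  obtain ⟨g, hg_def⟩ : ∃ g, -φ' 0 = g := ⟨_, rfl⟩
  have hg : 0 < g := by
    have : 0 < g ^ 2 := by
      rw [← hg_def, neg_sq]; nlinarith [mul_nonneg (mul_nonneg hH1 hΔ.le) hΔ.le]
    exact lt_of_le_of_ne (by linarith) fun h => by simp [← h] at this
  obtain ⟨η, hη_def⟩ : ∃ η, 3 * Δ / (2 * g) = η := ⟨_, rfl⟩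
  have hηg : η * g = 3 * Δ / 2 := by rw [← hη_def]; field_simp
  have hη : η ^ 2 * (H0 + 3 * H1 * Δ) < Δ := by
    have : η ^ 2 = 9 * Δ ^ 2 / (4 * g ^ 2) := by rw [← hη_def]; field_simp; ring
    rw [this, div_mul_eq_mul_div, div_lt_iff₀ (by positivity), ← hg_def, neg_sq]
    nlinarith
  obtain ⟨M, hM, hφη⟩ := exists_segment_sup_bound hH0 hH1 hφ hφ' hlb hφ'' hφ'0 (η := η)
    (by rw [← hη_def]; positivity)
  rw [hΔdef] at hM
  have hM3 := lt_three_mul_of_le_add_mul_sq hH0 hΔ hη hM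
  have hC : (H0 + H1 * M) * η ^ 2 < Δ :=
    calc (H0 + H1 * M) * η ^ 2 ≤ (H0 + 3 * H1 * Δ) * η ^ 2 := by
          nlinarith [mul_nonneg (mul_nonneg hH1 (sub_nonneg.2 hM3.le)) (sq_nonneg η)]
      _ < Δ := by linarith
  have hdescent : η * φ' 0 = -(3 * Δ / 2) := by rw [← hηg, ← hg_def]; ring
  linarith [hlb η]

end OneDim

section Line

variable {E F : Type*} [NormedAddCommGroup E] [NormedSpace ℝ E]
  [NormedAddCommGroup F] [NormedSpace ℝ F]

lemma hasDerivAt_comp_add_smul {g : E → F} {w v : E} {t : ℝ}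
    (hg : DifferentiableAt ℝ g (w + t • v)) :
    HasDerivAt (fun s : ℝ => g (w + s • v)) (fderiv ℝ g (w + t • v) v) t := by
  have hline : HasDerivAt (fun s : ℝ => w + s • v) v t := by
    simpa using ((hasDerivAt_id t).smul_const v).const_add w
  exact hg.hasFDerivAt.comp_hasDerivAt t hline

lemma fderiv_fderiv_apply_le (f : E → ℝ) (x v : E) :
    fderiv ℝ (fderiv ℝ f) x v v ≤ ‖iteratedFDeriv ℝ 2 f x‖ * ‖v‖ ^ 2 := by
  calc fderiv ℝ (fderiv ℝ f) x v v = iteratedFDeriv ℝ 2 f x ![v, v] := by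
        simp [iteratedFDeriv_two_apply]
    _ ≤ ‖iteratedFDeriv ℝ 2 f x‖ * ∏ i, ‖(![v, v] : Fin 2 → E) i‖ :=
        (le_abs_self _).trans ((iteratedFDeriv ℝ 2 f x).le_opNorm _)
    _ = ‖iteratedFDeriv ℝ 2 f x‖ * ‖v‖ ^ 2 := by simp [Fin.prod_univ_two, sq]

end Line

lemma fderiv_apply_neg_normalize_gradient {F : Type*} [NormedAddCommGroup F]
    [InnerProductSpace ℝ F] [CompleteSpace F] (f : F → ℝ) (x : F) :
    fderiv ℝ f x (-(‖gradient f x‖⁻¹ • gradient f x)) = -‖gradient f x‖ := by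
  rw [← inner_gradient_left, inner_neg_right, real_inner_smul_right,
    real_inner_self_eq_norm_sq]
  obtain h | h := eq_or_ne ‖gradient f x‖ 0
  · simp [h]
  · field_simp

/-- Gradient bound for `(H0,H1)`-smooth functions. -/
theorem stmt_6 {d : ℕ} (f : EuclideanSpace ℝ (Fin d) → ℝ)
    (H0 H1 fstar : ℝ) (hH0 : 0 ≤ H0) (hH1 : 0 ≤ H1)
    (hf : ContDiff ℝ 2 f) (hfstar : IsGLB (Set.range f) fstar)
    (hs : ∀ z, ‖iteratedFDeriv ℝ 2 f z‖ ≤ H0 + H1 * (f z - fstar)) :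
    ∀ w, ‖gradient f w‖ ^ 2 ≤
      (9 / 4) * (H0 + 3 * H1 * (f w - fstar)) * (f w - fstar) := by
  intro w
  set v := -(‖gradient f w‖⁻¹ • gradient f w)
  have hv : ‖v‖ ≤ 1 := by
    simpa [v, norm_smul] using inv_mul_le_one_of_le₀ le_rfl (norm_nonneg (gradient f w))
  have hdf : Differentiable ℝ f := hf.differentiable two_ne_zero
  have hdf' : Differentiable ℝ (fderiv ℝ f) :=
    (hf.fderiv_right le_rfl).differentiable one_ne_zero
  have hdescent := fderiv_apply_neg_normalize_gradient f w
  have := sq_deriv_le_of_secondDeriv_le (φ := fun t => f (w + t • v))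
    (φ'' := fun t => fderiv ℝ (fderiv ℝ f) (w + t • v) v v) hH0 hH1
    (fun t => hasDerivAt_comp_add_smul (hdf _))
    (fun t => (ContinuousLinearMap.apply ℝ ℝ v).hasFDerivAt.comp_hasDerivAt t
      (hasDerivAt_comp_add_smul (hdf' _)))
    (fun t => hfstar.1 ⟨_, rfl⟩)
    (fun t => (fderiv_fderiv_apply_le f _ v).trans <|
      (mul_le_of_le_one_right (norm_nonneg _) (pow_le_one₀ (norm_nonneg v) hv)).trans (hs _))
    (by simp [v, hdescent])
  simpa [v, hdescent] using this
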